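/- Let C be the divided power coalgebra over a field F, with basis (c_n)_{n≥0}, Δ(c_n) = Σ_{i+j=n} c_i⊗c_j, ε(c_n) = δ_{0,n}, and let H be the coalgebra with basis {c_n, x_n (n≥0), t} with Δ(c_n) = Σ_{i+j=n} c_i⊗c_j, Δ(x_n) = Σ_{i+j=n} c_i⊗x_j + x_n⊗t, Δ(t) = t⊗t, ε(c_n) = δ_{0,n}, ε(t) = 1, ε(x_n) = 0. Then H is a coassociative counital coalgebra, and F·t is a one-dimensional (simple) right subcomodule of H which is a direct summand of H as right comodules, with complement spanned by {(c_n)_n, (x_n)_n}. -/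

import Mathlib

/-!
Coassociativity on `c_n` and `x_n` is a re-indexing of a sum over the triples `a + b + c = n`;
the extra term `x_n ⊗ t` is compatible with it because `t` is grouplike. In the basis
`{c_n, x_n, t}`, `F·t` and the span of the `c_n, x_n` are the vectors supported on `{t}` and on
its complement, hence complementary, and both are right subcomodules because every left tensor
factor of `Δ(b)` for a basis vector `b` lies in the same part as `b`.
-/

open TensorProduct

noncomputable section

variable (F : Type*) [Field F]

/-- The basis of `H`: elements `c_n`, `x_n` (`n ≥ 0`) and `t`. -/
abbrev HBasis := ℕ ⊕ ℕ ⊕ Unit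

def cb (n : ℕ) : HBasis := Sum.inl n
def xb (n : ℕ) : HBasis := Sum.inr (Sum.inl n)
def tb : HBasis := Sum.inr (Sum.inr ())

/-- The underlying vector space of `H`, with basis `{c_n, x_n, t}`. -/
abbrev HSp := HBasis →₀ F

/-- The comultiplication of `H`: `Δ(c_n) = Σ_{i+j=n} c_i ⊗ c_j`,
`Δ(x_n) = Σ_{i+j=n} c_i ⊗ x_j + x_n ⊗ t`, `Δ(t) = t ⊗ t`. -/
def ΔH : HSp F →ₗ[F] HSp F ⊗[F] HSp F :=
  Finsupp.lift _ F _ fun b =>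
    match b with
    | Sum.inl n => ∑ i ∈ Finset.range (n + 1),
        Finsupp.single (cb i) (1 : F) ⊗ₜ[F] Finsupp.single (cb (n - i)) (1 : F)
    | Sum.inr (Sum.inl n) =>
        (∑ i ∈ Finset.range (n + 1),
          Finsupp.single (cb i) (1 : F) ⊗ₜ[F] Finsupp.single (xb (n - i)) (1 : F)) +
        Finsupp.single (xb n) (1 : F) ⊗ₜ[F] Finsupp.single tb (1 : F)
    | Sum.inr (Sum.inr _) => Finsupp.single tb (1 : F) ⊗ₜ[F] Finsupp.single tb (1 : F)

/-- The counit of `H`: `ε(c_n) = δ_{0,n}`, `ε(x_n) = 0`, `ε(t) = 1`. -/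
def εH : HSp F →ₗ[F] F :=
  Finsupp.lift _ F _ fun b =>
    match b with
    | Sum.inl n => if n = 0 then (1 : F) else 0
    | Sum.inr (Sum.inl _) => 0
    | Sum.inr (Sum.inr _) => 1

/-- The line `F·t`. -/
def Tline : Submodule F (HSp F) := Submodule.span F {Finsupp.single tb (1 : F)}

/-- The span of the `c_n`'s and `x_n`'s. -/
def Scomp : Submodule F (HSp F) :=
  Submodule.span F
    {v : HSp F | (∃ n, v = Finsupp.single (cb n) (1 : F)) ∨
      (∃ n, v = Finsupp.single (xb n) (1 : F))}

/-- `V` is a right subcomodule of `H`: `Δ(V) ⊆ V ⊗ H`. -/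
def IsRightSubcomoduleH (V : Submodule F (HSp F)) : Prop :=
  ∀ v ∈ V, ΔH F v ∈ LinearMap.range (LinearMap.rTensor (HSp F) V.subtype)

theorem Finsupp.isCompl_supported_compl {α M R : Type*} [Semiring R] [AddCommMonoid M]
    [Module R M] (s : Set α) : IsCompl (supported M R s) (supported M R sᶜ) where
  disjoint := disjoint_supported_supported disjoint_compl_right
  codisjoint := codisjoint_iff.2 <| by
    rw [← supported_union, Set.union_compl_self, supported_univ]

theorem LinearMap.tmul_mem_range_rTensor_subtype {R M N : Type*} [CommSemiring R]
    [AddCommMonoid M] [AddCommMonoid N] [Module R M] [Module R N] {V : Submodule R M} {v : M}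
    (hv : v ∈ V) (n : N) : v ⊗ₜ[R] n ∈ range (V.subtype.rTensor N) :=
  ⟨⟨v, hv⟩ ⊗ₜ n, rfl⟩

open Finset in
/-- Both sides sum `f a b c` over the triples with `a + b + c = n`. -/
theorem Finset.sum_range_sum_range_sub_assoc {M : Type*} [AddCommMonoid M] (n : ℕ)
    (f : ℕ → ℕ → ℕ → M) :
    ∑ i ∈ range (n + 1), ∑ j ∈ range (i + 1), f j (i - j) (n - i) =
      ∑ i ∈ range (n + 1), ∑ j ∈ range (n - i + 1), f i j (n - i - j) := by
  rw [sum_sigma', sum_sigma']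
  refine sum_nbij' (fun p => ⟨p.2, p.1 - p.2⟩) (fun p => ⟨p.1 + p.2, p.1⟩) ?_ ?_ ?_ ?_ ?_ <;>
    rintro ⟨i, j⟩ h <;>
    simp only [mem_sigma, mem_range, Sigma.mk.injEq, heq_eq_eq, and_true, true_and] at h ⊢
  all_goals first | omega | (congr 1; omega)

theorem HBasis.forall {P : HBasis → Prop} :
    (∀ b, P b) ↔ (∀ n, P (cb n)) ∧ (∀ n, P (xb n)) ∧ P tb :=
  ⟨fun h => ⟨fun _ => h _, fun _ => h _, h _⟩, fun ⟨hc, hx, ht⟩ b => by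
    rcases b with n | n | ⟨⟩
    exacts [hc n, hx n, ht]⟩

open Finsupp

theorem ΔH_single_cb (n : ℕ) : ΔH F (single (cb n) 1) =
    ∑ i ∈ Finset.range (n + 1), single (cb i) (1 : F) ⊗ₜ[F] single (cb (n - i)) (1 : F) := by
  simp [ΔH, cb]

theorem ΔH_single_xb (n : ℕ) : ΔH F (single (xb n) 1) =
    (∑ i ∈ Finset.range (n + 1), single (cb i) (1 : F) ⊗ₜ[F] single (xb (n - i)) (1 : F)) +
      single (xb n) (1 : F) ⊗ₜ[F] single tb (1 : F) := by
  simp [ΔH, xb]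

theorem ΔH_single_tb : ΔH F (single tb 1) = single tb (1 : F) ⊗ₜ[F] single tb (1 : F) := by
  simp [ΔH, tb]

theorem εH_single_cb (n : ℕ) : εH F (single (cb n) 1) = if n = 0 then 1 else 0 := by
  simp [εH, cb]

theorem εH_single_xb (n : ℕ) : εH F (single (xb n) 1) = 0 := by
  simp [εH, xb]

theorem εH_single_tb : εH F (single tb 1) = 1 := by
  simp [εH, tb]

theorem ΔH_coassoc : TensorProduct.assoc F (HSp F) (HSp F) (HSp F) ∘ₗ
    (ΔH F).rTensor (HSp F) ∘ₗ ΔH F = (ΔH F).lTensor (HSp F) ∘ₗ ΔH F := by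
  refine Finsupp.basisSingleOne.ext (HBasis.forall.2 ⟨fun n => ?_, fun n => ?_, ?_⟩) <;>
    simp only [coe_basisSingleOne, LinearMap.comp_apply, LinearEquiv.coe_coe]
  · simp only [ΔH_single_cb, map_sum, LinearMap.rTensor_tmul, LinearMap.lTensor_tmul, sum_tmul,
      tmul_sum, assoc_tmul]
    exact Finset.sum_range_sum_range_sub_assoc n fun a b c =>
      single (cb a) (1 : F) ⊗ₜ (single (cb b) (1 : F) ⊗ₜ single (cb c) (1 : F))
  · simp only [ΔH_single_xb, ΔH_single_cb, ΔH_single_tb, map_add, map_sum,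
      LinearMap.rTensor_tmul, LinearMap.lTensor_tmul, sum_tmul, tmul_sum, tmul_add, add_tmul,
      assoc_tmul]
    rw [Finset.sum_range_sum_range_sub_assoc n fun a b c =>
      single (cb a) (1 : F) ⊗ₜ (single (cb b) (1 : F) ⊗ₜ single (xb c) (1 : F)),
      Finset.sum_add_distrib]
    abel
  · simp only [ΔH_single_tb, LinearMap.rTensor_tmul, LinearMap.lTensor_tmul, assoc_tmul]

theorem rTensor_εH_comp_ΔH :
    (εH F).rTensor (HSp F) ∘ₗ ΔH F = TensorProduct.mk F F (HSp F) 1 := by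
  refine Finsupp.basisSingleOne.ext (HBasis.forall.2 ⟨fun n => ?_, fun n => ?_, ?_⟩) <;>
    simp only [coe_basisSingleOne, LinearMap.comp_apply, TensorProduct.mk_apply]
  · simp only [ΔH_single_cb, map_sum, LinearMap.rTensor_tmul, εH_single_cb]
    rw [Finset.sum_eq_single_of_mem 0 (by simp)]
    · simp
    · intro i _ hi; simp [hi]
  · simp only [ΔH_single_xb, map_add, map_sum, LinearMap.rTensor_tmul, εH_single_cb, εH_single_xb]
    rw [Finset.sum_eq_single_of_mem 0 (by simp)]
    · simp
    · intro i _ hi; simp [hi]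
  · simp [ΔH_single_tb, εH_single_tb]

theorem lTensor_εH_comp_ΔH :
    (εH F).lTensor (HSp F) ∘ₗ ΔH F = (TensorProduct.mk F (HSp F) F).flip 1 := by
  refine Finsupp.basisSingleOne.ext (HBasis.forall.2 ⟨fun n => ?_, fun n => ?_, ?_⟩) <;>
    simp only [coe_basisSingleOne, LinearMap.comp_apply, LinearMap.flip_apply,
      TensorProduct.mk_apply]
  · simp only [ΔH_single_cb, map_sum, LinearMap.lTensor_tmul, εH_single_cb]
    rw [Finset.sum_eq_single_of_mem n (by simp)]
    · simp
    · intro i hi hin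
      rw [Finset.mem_range] at hi
      rw [if_neg (by omega)]
      simp
  · simp [ΔH_single_xb, εH_single_xb, εH_single_tb]
  · simp [ΔH_single_tb, εH_single_tb]

theorem exists_coalgebra_ΔH_εH :
    ∃ inst : Coalgebra F (HSp F), inst.comul = ΔH F ∧ inst.counit = εH F :=
  ⟨{ comul := ΔH F
     counit := εH F
     coassoc := ΔH_coassoc F
     rTensor_counit_comp_comul := rTensor_εH_comp_ΔH F
     lTensor_counit_comp_comul := lTensor_εH_comp_ΔH F }, rfl, rfl⟩

theorem tline_eq_supported : Tline F = supported F F {tb} := by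
  rw [Tline, supported_eq_span_single, Set.image_singleton]

theorem scomp_eq_supported : Scomp F = supported F F {tb}ᶜ := by
  rw [Scomp, supported_eq_span_single]
  congr 1
  ext v
  constructor
  · rintro (⟨n, rfl⟩ | ⟨n, rfl⟩)
    exacts [⟨cb n, by simp [cb, tb], rfl⟩, ⟨xb n, by simp [xb, tb], rfl⟩]
  · rintro ⟨b, hb, rfl⟩
    rcases b with n | n | ⟨⟩
    exacts [Or.inl ⟨n, rfl⟩, Or.inr ⟨n, rfl⟩, absurd rfl hb]

theorem isRightSubcomoduleH_span (s : Set (HSp F))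
    (h : ∀ v ∈ s, ΔH F v ∈ LinearMap.range ((Submodule.span F s).subtype.rTensor (HSp F))) :
    IsRightSubcomoduleH F (Submodule.span F s) :=
  fun _ hv => (Submodule.span_le (p := (LinearMap.range _).comap (ΔH F))).2 h hv

theorem isRightSubcomoduleH_tline : IsRightSubcomoduleH F (Tline F) := by
  refine isRightSubcomoduleH_span F _ ?_
  rintro v rfl
  rw [ΔH_single_tb]
  exact LinearMap.tmul_mem_range_rTensor_subtype (Submodule.mem_span_singleton_self _) _

theorem isRightSubcomoduleH_scomp : IsRightSubcomoduleH F (Scomp F) := by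
  have hc (n : ℕ) : single (cb n) (1 : F) ∈ Scomp F := Submodule.subset_span (Or.inl ⟨n, rfl⟩)
  have hx (n : ℕ) : single (xb n) (1 : F) ∈ Scomp F := Submodule.subset_span (Or.inr ⟨n, rfl⟩)
  refine isRightSubcomoduleH_span F _ ?_
  rintro v (⟨n, rfl⟩ | ⟨n, rfl⟩)
  · rw [ΔH_single_cb]
    exact sum_mem fun i _ => LinearMap.tmul_mem_range_rTensor_subtype (hc i) _
  · rw [ΔH_single_xb]
    exact add_mem (sum_mem fun i _ => LinearMap.tmul_mem_range_rTensor_subtype (hc i) _)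
      (LinearMap.tmul_mem_range_rTensor_subtype (hx n) _)

theorem statement18 :
    (∃ inst : Coalgebra F (HSp F), inst.comul = ΔH F ∧ inst.counit = εH F) ∧
    IsRightSubcomoduleH F (Tline F) ∧
    Module.finrank F (Tline F) = 1 ∧
    IsRightSubcomoduleH F (Scomp F) ∧
    IsCompl (Tline F) (Scomp F) := by
  refine ⟨exists_coalgebra_ΔH_εH F, isRightSubcomoduleH_tline F, ?_,
    isRightSubcomoduleH_scomp F, ?_⟩
  · exact finrank_span_singleton (single_ne_zero.2 one_ne_zero)
  · rw [tline_eq_supported, scomp_eq_supported]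
    exact isCompl_supported_compl _
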